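/- Let g be a bounded continuous function on ℝⁿ all of whose partial derivatives up to order 2 exist and satisfy ‖∂^α g‖_∞ ≤ C for |α| ≤ 2, and let u_g be its Poisson extension to the upper half-space. Then y^{2−s} |∂²u_g/∂y²(x,y)| ≤ C' min(y^{2−s}, y^{−s}) for all (x,y), where 0 < s ≤ 1; in particular this bound tends to 0 uniformly in x both as y → 0⁺ and as y → ∞. -/

import Mathlib

open MeasureTheory

/-- The Poisson kernel `P_y(x) = c y (|x|² + y²)^{-(n+1)/2}` on the upper half-space. -/
noncomputable def halfSpacePoissonKernel (n : ℕ) (c : ℝ) (y : ℝ)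
    (x : EuclideanSpace ℝ (Fin n)) : ℝ :=
  c * y / (‖x‖ ^ 2 + y ^ 2) ^ (((n : ℝ) + 1) / 2)

/-!
Write `u(y) = ∫ P_y(z) g(x - z) dz`. Differentiating twice under the integral sign,
`u''(y) = ∫ ∂²_y P_y(z) g(x - z) dz`, and the explicit formula for `∂²_y P_y` gives
`|∂²_y P_y| ≤ M y⁻² P_y` and `‖z‖² |∂²_y P_y| ≤ M P_y`, with `M` depending only on `n`.
The first bound with `|g| ≤ C` and `∫ P_y = 1` gives `|u''(y)| ≤ M C y⁻²`. For the second,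
`∂²_y P_y` is even and has integral `0` (differentiate `∫ P_y = 1` twice), so it annihilates the
affine part of the Taylor expansion of `g` at `x`; the remainder is at most `C ‖z‖²`, whence
`|u''(y)| ≤ M C`.
-/

open Filter Topology Set

/-- The kernel `c t (a + t²)^{-e}`, with `a = ‖z‖²`, and below its first two `t`-derivatives. -/
noncomputable def poissonProfile (c e t a : ℝ) : ℝ :=
  c * t * (a + t ^ 2) ^ (-e)

noncomputable def poissonProfileDeriv (c e t a : ℝ) : ℝ :=
  c * (a + t ^ 2) ^ (-e) - 2 * c * e * t ^ 2 * (a + t ^ 2) ^ (-e - 1)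

noncomputable def poissonProfileDeriv2 (c e t a : ℝ) : ℝ :=
  -6 * c * e * t * (a + t ^ 2) ^ (-e - 1) + 4 * c * e * (e + 1) * t ^ 3 * (a + t ^ 2) ^ (-e - 2)

theorem halfSpacePoissonKernel_eq_poissonProfile (n : ℕ) (c t : ℝ)
    (z : EuclideanSpace ℝ (Fin n)) :
    halfSpacePoissonKernel n c t z = poissonProfile c (((n : ℝ) + 1) / 2) t (‖z‖ ^ 2) := by
  rw [halfSpacePoissonKernel, poissonProfile, Real.rpow_neg (by positivity), div_eq_mul_inv]

section Profile

variable {c e a t r : ℝ}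

@[fun_prop]
theorem measurable_poissonProfile : Measurable (poissonProfile c e t) := by
  unfold poissonProfile; fun_prop

@[fun_prop]
theorem measurable_poissonProfileDeriv : Measurable (poissonProfileDeriv c e t) := by
  unfold poissonProfileDeriv; fun_prop

@[fun_prop]
theorem measurable_poissonProfileDeriv2 : Measurable (poissonProfileDeriv2 c e t) := by
  unfold poissonProfileDeriv2; fun_prop

theorem hasDerivAt_rpow_add_sq (p : ℝ) (h : 0 < a + t ^ 2) :
    HasDerivAt (fun t => (a + t ^ 2) ^ p) (p * (a + t ^ 2) ^ (p - 1) * (2 * t)) t := by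
  have hsq : HasDerivAt (fun t : ℝ => a + t ^ 2) (2 * t) t := by
    simpa using (hasDerivAt_pow 2 t).const_add a
  exact (Real.hasDerivAt_rpow_const (Or.inl h.ne')).comp t hsq

theorem hasDerivAt_poissonProfile (h : 0 < a + t ^ 2) :
    HasDerivAt (poissonProfile c e · a) (poissonProfileDeriv c e t a) t := by
  have : HasDerivAt (fun t => c * t * (a + t ^ 2) ^ (-e)) _ t :=
    ((hasDerivAt_id t).const_mul c).mul (hasDerivAt_rpow_add_sq (-e) h)
  exact this.congr_deriv (by simp only [poissonProfileDeriv, id]; ring)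

theorem hasDerivAt_poissonProfileDeriv (h : 0 < a + t ^ 2) :
    HasDerivAt (poissonProfileDeriv c e · a) (poissonProfileDeriv2 c e t a) t := by
  have : HasDerivAt (fun t => c * (a + t ^ 2) ^ (-e) - 2 * c * e * t ^ 2 * (a + t ^ 2) ^ (-e - 1))
      _ t :=
    ((hasDerivAt_rpow_add_sq (-e) h).const_mul c).sub
      (((hasDerivAt_pow 2 t).const_mul (2 * c * e)).mul (hasDerivAt_rpow_add_sq (-e - 1) h))
  refine this.congr_deriv ?_
  simp only [poissonProfileDeriv2, show -e - 1 - 1 = -e - 2 by ring]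
  push_cast
  ring

theorem mul_rpow_sub_one_le {A b : ℝ} (p : ℝ) (hA : 0 < A) (hb : b ≤ A) :
    b * A ^ (p - 1) ≤ A ^ p := by
  rw [Real.rpow_sub_one hA.ne', mul_div_assoc', div_le_iff₀ hA, mul_comm (A ^ p)]
  exact mul_le_mul_of_nonneg_right hb (by positivity)

variable (hc : 0 ≤ c) (he : 0 ≤ e) (ha : 0 ≤ a)
include hc he ha

theorem abs_poissonProfileDeriv_le_mul_rpow (ht : 0 < t) :
    |poissonProfileDeriv c e t a| ≤ (1 + 2 * e) * c * (a + t ^ 2) ^ (-e) := by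
  have hA : 0 < a + t ^ 2 := by positivity
  have hsq : t ^ 2 * (a + t ^ 2) ^ (-e - 1) ≤ (a + t ^ 2) ^ (-e) :=
    mul_rpow_sub_one_le _ hA (by linarith)
  have h₀ : 0 ≤ t ^ 2 * (a + t ^ 2) ^ (-e - 1) := by positivity
  have h₁ : 0 ≤ c * (a + t ^ 2) ^ (-e) := by positivity
  have h₂ := mul_le_mul_of_nonneg_left hsq (by positivity : 0 ≤ 2 * c * e)
  have h₃ := mul_nonneg (by positivity : 0 ≤ 2 * c * e) h₀
  rw [poissonProfileDeriv, abs_le]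
  constructor <;> nlinarith

theorem abs_poissonProfileDeriv2_le_mul_rpow (ht : 0 < t) :
    |poissonProfileDeriv2 c e t a| ≤ (4 * e ^ 2 + 10 * e) * c * t * (a + t ^ 2) ^ (-e - 1) := by
  have hA : 0 < a + t ^ 2 := by positivity
  have hsq : t ^ 2 * (a + t ^ 2) ^ (-e - 2) ≤ (a + t ^ 2) ^ (-e - 1) := by
    rw [show -e - 2 = (-e - 1) - 1 by ring]
    exact mul_rpow_sub_one_le _ hA (by linarith)
  have h₀ : 0 ≤ t ^ 2 * (a + t ^ 2) ^ (-e - 2) := by positivity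
  have h₁ : 0 ≤ c * e * t * (a + t ^ 2) ^ (-e - 1) := by positivity
  have h₂ := mul_le_mul_of_nonneg_left hsq (by positivity : 0 ≤ 4 * c * e * (e + 1) * t)
  have h₃ := mul_nonneg (by positivity : 0 ≤ 4 * c * e * (e + 1) * t) h₀
  rw [poissonProfileDeriv2, abs_le]
  constructor <;> nlinarith

theorem abs_poissonProfileDeriv_le (hr : 0 < r) (hrt : r ≤ t) :
    |poissonProfileDeriv c e t a| ≤ (1 + 2 * e) / r * poissonProfile c e r a := by
  have hmono : (a + t ^ 2) ^ (-e) ≤ (a + r ^ 2) ^ (-e) :=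
    Real.rpow_le_rpow_of_nonpos (by positivity) (by nlinarith) (by linarith)
  calc |poissonProfileDeriv c e t a| ≤ (1 + 2 * e) * c * (a + t ^ 2) ^ (-e) :=
        abs_poissonProfileDeriv_le_mul_rpow hc he ha (hr.trans_le hrt)
    _ ≤ (1 + 2 * e) * c * (a + r ^ 2) ^ (-e) := by gcongr
    _ = (1 + 2 * e) / r * poissonProfile c e r a := by
        rw [poissonProfile]; field_simp

theorem abs_poissonProfileDeriv2_le (hr : 0 < r) (hrt : r ≤ t) :
    |poissonProfileDeriv2 c e t a| ≤ (4 * e ^ 2 + 10 * e) / r ^ 2 * poissonProfile c e r a := by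
  have ht : 0 < t := hr.trans_le hrt
  have hsq : t ^ 2 * (a + t ^ 2) ^ (-e - 1) ≤ (a + t ^ 2) ^ (-e) :=
    mul_rpow_sub_one_le _ (by positivity) (by linarith)
  have hmono : (a + t ^ 2) ^ (-e) ≤ (a + r ^ 2) ^ (-e) :=
    Real.rpow_le_rpow_of_nonpos (by positivity) (by nlinarith) (by linarith)
  calc |poissonProfileDeriv2 c e t a|
      ≤ (4 * e ^ 2 + 10 * e) * c * t * (a + t ^ 2) ^ (-e - 1) :=
        abs_poissonProfileDeriv2_le_mul_rpow hc he ha ht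
    _ = (4 * e ^ 2 + 10 * e) * c / t * (t ^ 2 * (a + t ^ 2) ^ (-e - 1)) := by
        field_simp
    _ ≤ (4 * e ^ 2 + 10 * e) * c / r * (a + r ^ 2) ^ (-e) := by gcongr; exact hsq.trans hmono
    _ = (4 * e ^ 2 + 10 * e) / r ^ 2 * poissonProfile c e r a := by
        rw [poissonProfile]; field_simp

theorem mul_abs_poissonProfileDeriv2_le (ht : 0 < t) :
    a * |poissonProfileDeriv2 c e t a| ≤ (4 * e ^ 2 + 10 * e) * poissonProfile c e t a := by
  have hA : a * (a + t ^ 2) ^ (-e - 1) ≤ (a + t ^ 2) ^ (-e) :=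
    mul_rpow_sub_one_le _ (by positivity) (by nlinarith)
  calc a * |poissonProfileDeriv2 c e t a|
      ≤ a * ((4 * e ^ 2 + 10 * e) * c * t * (a + t ^ 2) ^ (-e - 1)) :=
        mul_le_mul_of_nonneg_left (abs_poissonProfileDeriv2_le_mul_rpow hc he ha ht) ha
    _ = (4 * e ^ 2 + 10 * e) * c * t * (a * (a + t ^ 2) ^ (-e - 1)) := by ring
    _ ≤ (4 * e ^ 2 + 10 * e) * c * t * (a + t ^ 2) ^ (-e) := by gcongr
    _ = (4 * e ^ 2 + 10 * e) * poissonProfile c e t a := by rw [poissonProfile]; ring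

end Profile

theorem norm_sub_sub_fderiv_le_of_norm_iteratedFDeriv_two_le {E F : Type*}
    [NormedAddCommGroup E] [NormedSpace ℝ E] [NormedAddCommGroup F] [NormedSpace ℝ F]
    {g : E → F} {C : ℝ} (hg : ContDiff ℝ 2 g) (hC : ∀ z, ‖iteratedFDeriv ℝ 2 g z‖ ≤ C)
    (x y : E) : ‖g y - g x - fderiv ℝ g x (y - x)‖ ≤ C * ‖y - x‖ ^ 2 := by
  have hC₂ : ∀ z, ‖fderiv ℝ (fderiv ℝ g) z‖ ≤ C := fun z => by
    simpa only [← norm_iteratedFDeriv_fderiv, norm_iteratedFDeriv_zero] using hC z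
  have hDg : Differentiable ℝ (fderiv ℝ g) :=
    (hg.fderiv_right (m := 1) le_rfl).differentiable one_ne_zero
  have hlip : ∀ u, ‖fderiv ℝ g u - fderiv ℝ g x‖ ≤ C * ‖u - x‖ := fun u =>
    convex_univ.norm_image_sub_le_of_norm_fderiv_le (fun v _ => hDg v) (fun v _ => hC₂ v)
      (mem_univ x) (mem_univ u)
  have hC₀ : 0 ≤ C := (norm_nonneg _).trans (hC x)
  calc ‖g y - g x - fderiv ℝ g x (y - x)‖ ≤ C * ‖y - x‖ * ‖y - x‖ :=
        (convex_closedBall x ‖y - x‖).norm_image_sub_le_of_norm_fderiv_le'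
          (fun v _ => (hg.differentiable two_ne_zero) v)
          (fun v hv =>
            (hlip v).trans (mul_le_mul_of_nonneg_left (mem_closedBall_iff_norm.1 hv) hC₀))
          (Metric.mem_closedBall_self (norm_nonneg _)) (mem_closedBall_iff_norm.2 le_rfl)
    _ = C * ‖y - x‖ ^ 2 := by ring

section Integral

variable {E : Type*} [MeasurableSpace E] {μ : Measure E}

theorem hasDerivAt_integral_mul_of_dominated {k k' : ℝ → E → ℝ} {G ψ : E → ℝ} {U : Set ℝ}
    {y B : ℝ} (hU : U ∈ 𝓝 y) (hk : ∀ t, AEStronglyMeasurable (k t) μ)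
    (hk' : AEStronglyMeasurable (k' y) μ) (hky : Integrable (k y) μ) (hG : Integrable G μ)
    (hψ : AEStronglyMeasurable ψ μ) (hψB : ∀ z, ‖ψ z‖ ≤ B)
    (hderiv : ∀ t ∈ U, ∀ z, HasDerivAt (k · z) (k' t z) t)
    (hbound : ∀ t ∈ U, ∀ z, ‖k' t z‖ ≤ G z) :
    HasDerivAt (fun t => ∫ z, k t z * ψ z ∂μ) (∫ z, k' y z * ψ z ∂μ) y := by
  have hG₀ : ∀ z, 0 ≤ G z := fun z => (norm_nonneg _).trans (hbound y (mem_of_mem_nhds hU) z)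
  refine (hasDerivAt_integral_of_dominated_loc_of_deriv_le hU
    (.of_forall fun t => (hk t).mul hψ) (hky.mul_bdd hψ (.of_forall hψB)) (hk'.mul hψ)
    (bound := fun z => G z * B) (.of_forall fun z t ht => ?_) (hG.mul_const B)
    (.of_forall fun z t ht => (hderiv t ht z).mul_const (ψ z))).2
  rw [norm_mul]
  exact mul_le_mul (hbound t ht z) (hψB z) (norm_nonneg _) (hG₀ z)

section Symmetric

variable [AddGroup E] [MeasurableNeg E] [μ.IsNegInvariant]

theorem integral_eq_zero_of_odd {f : E → ℝ} (hf : ∀ z, f (-z) = -f z) : ∫ z, f z ∂μ = 0 := by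
  have h := integral_neg_eq_self f μ
  simp only [hf, integral_neg] at h
  linarith

/-- An even kernel with vanishing integral annihilates affine functions. -/
theorem integral_mul_eq_integral_mul_sub_of_even {k ψ L : E → ℝ} (b : ℝ)
    (hk_even : ∀ z, k (-z) = k z) (hk₀ : ∫ z, k z ∂μ = 0) (hL : ∀ z, L (-z) = -L z)
    (hk : Integrable k μ) (hkψ : Integrable (fun z => k z * ψ z) μ)
    (hkR : Integrable (fun z => k z * (ψ z - b - L z)) μ) :
    ∫ z, k z * ψ z ∂μ = ∫ z, k z * (ψ z - b - L z) ∂μ := by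
  have hkL : Integrable (fun z => k z * L z) μ :=
    ((hkψ.sub (hk.mul_const b)).sub hkR).congr
      (.of_forall fun z => by simp only [Pi.sub_apply]; ring)
  have hkL₀ : ∫ z, k z * L z ∂μ = 0 :=
    integral_eq_zero_of_odd fun z => by rw [hk_even, hL, mul_neg]
  have hsplit : (fun z => k z * (ψ z - b - L z)) = fun z => k z * ψ z - k z * b - k z * L z := by
    ext z; ring
  rw [hsplit, integral_sub ?_ hkL, integral_sub hkψ (hk.mul_const b), integral_mul_const, hk₀,
    hkL₀]
  · ring
  · exact hkψ.sub (hk.mul_const b)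

end Symmetric

variable [NormedAddCommGroup E] {c e m y B : ℝ} {ψ : E → ℝ}

theorem abs_integral_poissonProfileDeriv2_mul_le (hc : 0 ≤ c) (he : 0 ≤ e)
    (hPy : Integrable (fun z => poissonProfile c e y (‖z‖ ^ 2)) μ) (hψB : ∀ z, ‖ψ z‖ ≤ B)
    (hy : 0 < y) :
    |∫ z, poissonProfileDeriv2 c e y (‖z‖ ^ 2) * ψ z ∂μ| ≤
      (4 * e ^ 2 + 10 * e) / y ^ 2 * B * ∫ z, poissonProfile c e y (‖z‖ ^ 2) ∂μ := by
  rw [← Real.norm_eq_abs, ← integral_const_mul]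
  refine norm_integral_le_of_norm_le (hPy.const_mul _) (.of_forall fun z => ?_)
  have hd := abs_poissonProfileDeriv2_le hc he (sq_nonneg ‖z‖) hy le_rfl
  rw [norm_mul, Real.norm_eq_abs]
  calc |poissonProfileDeriv2 c e y (‖z‖ ^ 2)| * ‖ψ z‖
      ≤ (4 * e ^ 2 + 10 * e) / y ^ 2 * poissonProfile c e y (‖z‖ ^ 2) * B :=
        mul_le_mul hd (hψB z) (norm_nonneg _) ((abs_nonneg _).trans hd)
    _ = (4 * e ^ 2 + 10 * e) / y ^ 2 * B * poissonProfile c e y (‖z‖ ^ 2) := by ring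

variable [OpensMeasurableSpace E]

section Derivatives

variable (hc : 0 ≤ c) (he : 0 ≤ e)
    (hP : ∀ t > 0, Integrable (fun z => poissonProfile c e t (‖z‖ ^ 2)) μ)
    (hψ : AEStronglyMeasurable ψ μ) (hψB : ∀ z, ‖ψ z‖ ≤ B)
include hc he hP hψ hψB

theorem hasDerivAt_integral_poissonProfile_mul (hy : 0 < y) :
    HasDerivAt (fun t => ∫ z, poissonProfile c e t (‖z‖ ^ 2) * ψ z ∂μ)
      (∫ z, poissonProfileDeriv c e y (‖z‖ ^ 2) * ψ z ∂μ) y :=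
  hasDerivAt_integral_mul_of_dominated (Ioi_mem_nhds (half_lt_self hy))
    (fun _ => (by fun_prop : Measurable _).aestronglyMeasurable)
    (by fun_prop : Measurable _).aestronglyMeasurable (hP y hy) ((hP _ (half_pos hy)).const_mul _)
    hψ hψB
    (fun t ht _ => hasDerivAt_poissonProfile
      (by have : 0 < t := (half_pos hy).trans ht; positivity))
    (fun t ht _ => abs_poissonProfileDeriv_le hc he (sq_nonneg _) (half_pos hy) (le_of_lt ht))

theorem hasDerivAt_integral_poissonProfileDeriv_mul (hy : 0 < y) :
    HasDerivAt (fun t => ∫ z, poissonProfileDeriv c e t (‖z‖ ^ 2) * ψ z ∂μ)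
      (∫ z, poissonProfileDeriv2 c e y (‖z‖ ^ 2) * ψ z ∂μ) y := by
  have hint : Integrable (fun z => poissonProfileDeriv c e y (‖z‖ ^ 2)) μ :=
    ((hP y hy).const_mul _).mono' (by fun_prop : Measurable _).aestronglyMeasurable
      (.of_forall fun z => abs_poissonProfileDeriv_le hc he (sq_nonneg _) hy le_rfl)
  exact hasDerivAt_integral_mul_of_dominated (Ioi_mem_nhds (half_lt_self hy))
    (fun _ => (by fun_prop : Measurable _).aestronglyMeasurable)
    (by fun_prop : Measurable _).aestronglyMeasurable hint ((hP _ (half_pos hy)).const_mul _)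
    hψ hψB
    (fun t ht _ => hasDerivAt_poissonProfileDeriv
      (by have : 0 < t := (half_pos hy).trans ht; positivity))
    (fun t ht _ => abs_poissonProfileDeriv2_le hc he (sq_nonneg _) (half_pos hy) (le_of_lt ht))

theorem iteratedDeriv_two_integral_poissonProfile_mul (hy : 0 < y) :
    iteratedDeriv 2 (fun t => ∫ z, poissonProfile c e t (‖z‖ ^ 2) * ψ z ∂μ) y =
      ∫ z, poissonProfileDeriv2 c e y (‖z‖ ^ 2) * ψ z ∂μ := by
  have hderiv : deriv (fun t => ∫ z, poissonProfile c e t (‖z‖ ^ 2) * ψ z ∂μ) =ᶠ[𝓝 y]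
      fun t => ∫ z, poissonProfileDeriv c e t (‖z‖ ^ 2) * ψ z ∂μ := by
    filter_upwards [Ioi_mem_nhds hy] with t ht
    exact (hasDerivAt_integral_poissonProfile_mul hc he hP hψ hψB ht).deriv
  rw [iteratedDeriv_succ, iteratedDeriv_one, hderiv.deriv_eq]
  exact (hasDerivAt_integral_poissonProfileDeriv_mul hc he hP hψ hψB hy).deriv

end Derivatives

theorem integral_poissonProfileDeriv2_eq_zero (hc : 0 ≤ c) (he : 0 ≤ e)
    (hP : ∀ t > 0, Integrable (fun z => poissonProfile c e t (‖z‖ ^ 2)) μ)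
    (hconst : ∀ t > 0, ∫ z, poissonProfile c e t (‖z‖ ^ 2) ∂μ = m) (hy : 0 < y) :
    ∫ z, poissonProfileDeriv2 c e y (‖z‖ ^ 2) ∂μ = 0 := by
  have h := iteratedDeriv_two_integral_poissonProfile_mul (ψ := fun _ => (1 : ℝ)) (B := 1)
    hc he hP aestronglyMeasurable_const (fun _ => norm_one.le) hy
  simp only [mul_one] at h
  have hm : (fun t => ∫ z, poissonProfile c e t (‖z‖ ^ 2) ∂μ) =ᶠ[𝓝 y] fun _ => m := by
    filter_upwards [Ioi_mem_nhds hy] with t ht using hconst t ht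
  rw [← h, hm.iteratedDeriv_eq, iteratedDeriv_const]
  simp

theorem abs_integral_poissonProfileDeriv2_mul_le_of_taylor [NormedSpace ℝ E] [MeasurableNeg E]
    [μ.IsNegInvariant] {C : ℝ} (hc : 0 ≤ c) (he : 0 ≤ e)
    (hP : ∀ t > 0, Integrable (fun z => poissonProfile c e t (‖z‖ ^ 2)) μ)
    (hconst : ∀ t > 0, ∫ z, poissonProfile c e t (‖z‖ ^ 2) ∂μ = m)
    (hψ : AEStronglyMeasurable ψ μ) (hψB : ∀ z, ‖ψ z‖ ≤ B) (b : ℝ) (L : E →L[ℝ] ℝ) (hC : 0 ≤ C)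
    (hR : ∀ z, |ψ z - b - L z| ≤ C * ‖z‖ ^ 2) (hy : 0 < y) :
    |∫ z, poissonProfileDeriv2 c e y (‖z‖ ^ 2) * ψ z ∂μ| ≤ (4 * e ^ 2 + 10 * e) * C * m := by
  have hpt : ∀ z, ‖poissonProfileDeriv2 c e y (‖z‖ ^ 2) * (ψ z - b - L z)‖ ≤
      (4 * e ^ 2 + 10 * e) * C * poissonProfile c e y (‖z‖ ^ 2) := fun z => by
    rw [norm_mul, Real.norm_eq_abs, Real.norm_eq_abs]
    calc |poissonProfileDeriv2 c e y (‖z‖ ^ 2)| * |ψ z - b - L z|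
        ≤ |poissonProfileDeriv2 c e y (‖z‖ ^ 2)| * (C * ‖z‖ ^ 2) :=
          mul_le_mul_of_nonneg_left (hR z) (abs_nonneg _)
      _ = C * (‖z‖ ^ 2 * |poissonProfileDeriv2 c e y (‖z‖ ^ 2)|) := by ring
      _ ≤ C * ((4 * e ^ 2 + 10 * e) * poissonProfile c e y (‖z‖ ^ 2)) :=
          mul_le_mul_of_nonneg_left (mul_abs_poissonProfileDeriv2_le hc he (sq_nonneg _) hy) hC
      _ = (4 * e ^ 2 + 10 * e) * C * poissonProfile c e y (‖z‖ ^ 2) := by ring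
  have hd₂ : AEStronglyMeasurable (fun z => poissonProfileDeriv2 c e y (‖z‖ ^ 2)) μ :=
    (by fun_prop : Measurable _).aestronglyMeasurable
  have hd₂_int : Integrable (fun z => poissonProfileDeriv2 c e y (‖z‖ ^ 2)) μ :=
    ((hP y hy).const_mul _).mono' hd₂
      (.of_forall fun z => abs_poissonProfileDeriv2_le hc he (sq_nonneg _) hy le_rfl)
  have hd₂R_int : Integrable (fun z => poissonProfileDeriv2 c e y (‖z‖ ^ 2) * (ψ z - b - L z)) μ :=
    ((hP y hy).const_mul _).mono'
      (hd₂.mul ((hψ.sub aestronglyMeasurable_const).sub L.continuous.aestronglyMeasurable))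
      (.of_forall hpt)
  rw [integral_mul_eq_integral_mul_sub_of_even b (fun z => by rw [norm_neg])
    (integral_poissonProfileDeriv2_eq_zero hc he hP hconst hy) (map_neg L) hd₂_int
    (hd₂_int.mul_bdd hψ (.of_forall hψB)) hd₂R_int, ← Real.norm_eq_abs, ← hconst y hy,
    ← integral_const_mul]
  exact norm_integral_le_of_norm_le ((hP y hy).const_mul _) (.of_forall hpt)

end Integral

theorem rpow_mul_abs_le_mul_min {X A y s : ℝ} (hy : 0 < y) (h₁ : |X| ≤ A) (h₂ : |X| ≤ A / y ^ 2) :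
    y ^ (2 - s) * |X| ≤ A * min (y ^ (2 - s)) (y ^ (-s)) := by
  have hys : y ^ (2 - s) / y ^ 2 = y ^ (-s) := by
    rw [← Real.rpow_natCast, ← Real.rpow_sub hy]; norm_num
  rw [mul_min_of_nonneg _ _ ((abs_nonneg X).trans h₁), ← hys]
  refine le_min ?_ ?_
  · rw [mul_comm A]; exact mul_le_mul_of_nonneg_left h₁ (by positivity)
  · calc y ^ (2 - s) * |X| ≤ y ^ (2 - s) * (A / y ^ 2) := by gcongr
      _ = A * (y ^ (2 - s) / y ^ 2) := by ring

theorem poisson_extension_second_derivative_decay_general (n : ℕ) (s : ℝ)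
    (c : ℝ) (hc : 0 < c)
    (hnorm : ∀ y : ℝ, 0 < y →
      ∫ x : EuclideanSpace ℝ (Fin n), halfSpacePoissonKernel n c y x = 1) :
    ∃ K > 0, ∀ (g : EuclideanSpace ℝ (Fin n) → ℝ) (C : ℝ),
      ContDiff ℝ 2 g →
      (∀ (m : ℕ), m ≤ 2 → ∀ x, ‖iteratedFDeriv ℝ m g x‖ ≤ C) →
      ∀ (x : EuclideanSpace ℝ (Fin n)) (y : ℝ), 0 < y →
        y ^ (2 - s) *
          |iteratedDeriv 2 (fun t => ∫ z, halfSpacePoissonKernel n c t (x - z) * g z) y| ≤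
        K * C * min (y ^ (2 - s)) (y ^ (-s)) := by
  set e : ℝ := ((n : ℝ) + 1) / 2
  have he : 0 ≤ e := by positivity
  have hP₁ : ∀ t > 0, ∫ z : EuclideanSpace ℝ (Fin n), poissonProfile c e t (‖z‖ ^ 2) = 1 := by
    simpa only [halfSpacePoissonKernel_eq_poissonProfile] using hnorm
  have hP : ∀ t > 0,
      Integrable fun z : EuclideanSpace ℝ (Fin n) => poissonProfile c e t (‖z‖ ^ 2) :=
    fun t ht => .of_integral_ne_zero (by rw [hP₁ t ht]; exact one_ne_zero)
  refine ⟨4 * e ^ 2 + 10 * e, by positivity, fun g C hg hC x y hy => ?_⟩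
  have hgC : ∀ z, ‖g z‖ ≤ C := by simpa using hC 0 (by norm_num)
  have hψ : AEStronglyMeasurable (fun z => g (x - z)) :=
    (hg.continuous.comp (by fun_prop)).aestronglyMeasurable
  have hR : ∀ z, |g (x - z) - g x - (-fderiv ℝ g x) z| ≤ C * ‖z‖ ^ 2 := fun z => by
    simpa using norm_sub_sub_fderiv_le_of_norm_iteratedFDeriv_two_le hg (hC 2 le_rfl) x (x - z)
  have hu : (fun t => ∫ z, halfSpacePoissonKernel n c t (x - z) * g z) =
      fun t => ∫ z, poissonProfile c e t (‖z‖ ^ 2) * g (x - z) := by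
    funext t
    rw [← integral_sub_left_eq_self _ _ x]
    simp only [sub_sub_cancel, halfSpacePoissonKernel_eq_poissonProfile]
    rfl
  rw [hu, iteratedDeriv_two_integral_poissonProfile_mul hc.le he hP hψ (fun _ => hgC _) hy]
  refine rpow_mul_abs_le_mul_min hy ?_ ?_
  · simpa [hP₁] using abs_integral_poissonProfileDeriv2_mul_le_of_taylor hc.le he hP hP₁ hψ
      (fun _ => hgC _) (g x) (-fderiv ℝ g x) ((norm_nonneg _).trans (hgC 0)) hR hy
  · refine (abs_integral_poissonProfileDeriv2_mul_le hc.le he (hP y hy) (fun _ => hgC _)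
      hy).trans_eq ?_
    rw [hP₁ y hy]
    ring

/-- Let `g` be bounded with all derivatives up to order 2 bounded by `C`,
and `u_g` its Poisson extension (normalized kernel). Then for `0 < s ≤ 1`,
`y^{2−s} |∂²u_g/∂y²(x,y)| ≤ K C min(y^{2−s}, y^{−s})`; in particular the bound tends to `0`
uniformly in `x` as `y → 0⁺` and as `y → ∞`. -/
theorem poisson_extension_second_derivative_decay (n : ℕ) (s : ℝ)
    (hs0 : 0 < s) (hs1 : s ≤ 1) (c : ℝ) (hc : 0 < c)
    (hnorm : ∀ y : ℝ, 0 < y →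
      ∫ x : EuclideanSpace ℝ (Fin n), halfSpacePoissonKernel n c y x = 1) :
    ∃ K > 0, ∀ (g : EuclideanSpace ℝ (Fin n) → ℝ) (C : ℝ),
      ContDiff ℝ 2 g →
      (∀ (m : ℕ), m ≤ 2 → ∀ x, ‖iteratedFDeriv ℝ m g x‖ ≤ C) →
      ∀ (x : EuclideanSpace ℝ (Fin n)) (y : ℝ), 0 < y →
        y ^ (2 - s) *
          |iteratedDeriv 2 (fun t => ∫ z, halfSpacePoissonKernel n c t (x - z) * g z) y| ≤
        K * C * min (y ^ (2 - s)) (y ^ (-s)) :=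
  poisson_extension_second_derivative_decay_general n s c hc hnorm
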